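/- arXiv:1411.7746 — 3 statements merged into one kernel-verified Lean document; each statement's English description precedes it below -/
import Mathlib

section
/- Bound on K_1 via Lagrange basis (Wainerman consequence): for each fixed x ∈ [-1,1] and every u ∈ [-1,1], |K_1(u)| ≤ max_{1≤j≤n} ‖ℓ_j‖_∞, where K_1(u) = 1_{x≥u} - ∑_{j=1}^n 1_{x_j ≥ u} ℓ_j(x). -/
open Finset

/-- The `k`-th Lagrange basis polynomial for nodes `x : Fin n → ℝ`. -/
noncomputable def lagBasis {n : ℕ} (x : Fin n → ℝ) (k : Fin n) (t : ℝ) : ℝ :=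
  ∏ j ∈ Finset.univ.erase k, (t - x j) / (x k - x j)

/-!
For a node `a` with `v a < x`, write `S(s) = ∑_{v i ≤ v a} ℓᵢ(x)` for the node set `s`.
Wainerman's bound `|S(s)| ≤ |ℓₐ(x)|` goes by induction on `s`. If some node `m` lies below `a`
and some `M` above it, the relation `(x - v m) ℓᵢ^{s∖m}(x) = (v i - v m) ℓᵢ^s(x)` gives the
Neville-type identity `(v M - v m) S(s) = (x - v m) S(s∖m) - (x - v M) S(s∖M)`; applied to `i = a`
it turns the two inductive bounds into `(v a - v m) |ℓₐ(x)| + (v M - v a) |ℓₐ(x)|`. Otherwise `a`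
is the largest node, so `S(s) = 1 ≤ ℓₐ(x)`, or the smallest, so `S(s) = ℓₐ(x)`. Nodes above `x`
are handled by the reflection `t ↦ -t`. Since `∑ ℓᵢ = 1`, `K₁(u)` is `±` such a partial sum with
`a` the node next to `u`, so `|K₁(u)| ≤ |ℓₐ(x)| ≤ ‖ℓₐ‖_∞`.
-/

open Polynomial

namespace Lagrange

section Field

variable {F ι : Type*} [Field F] [DecidableEq ι] {s : Finset ι} {v : ι → F} {i j : ι}

theorem eval_basisDivisor (a b x : F) : (basisDivisor a b).eval x = (a - b)⁻¹ * (x - b) := by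
  rw [basisDivisor, eval_mul, eval_C, eval_sub, eval_X, eval_C]

theorem basis_eq_basisDivisor_mul_basis_erase (hj : j ∈ s) (hij : i ≠ j) :
    Lagrange.basis s v i = basisDivisor (v i) (v j) * Lagrange.basis (s.erase j) v i := by
  rw [Lagrange.basis, Lagrange.basis, erase_right_comm]
  exact (mul_prod_erase _ (fun k => basisDivisor (v i) (v k)) (mem_erase.2 ⟨hij.symm, hj⟩)).symm

theorem sub_mul_eval_basis_erase (hvs : Set.InjOn v s) (hi : i ∈ s) (hj : j ∈ s) (hij : i ≠ j)
    (x : F) :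
    (x - v j) * (Lagrange.basis (s.erase j) v i).eval x =
      (v i - v j) * (Lagrange.basis s v i).eval x := by
  have hv : v i - v j ≠ 0 := sub_ne_zero.2 ((hvs.ne_iff hi hj).2 hij)
  rw [basis_eq_basisDivisor_mul_basis_erase hj hij, eval_mul, eval_basisDivisor]
  field_simp

theorem sum_filter_sub_mul_eval_basis (hvs : Set.InjOn v s) (hj : j ∈ s) (p : ι → Prop)
    [DecidablePred p] (x : F) :
    ∑ i ∈ s with p i, (v i - v j) * (Lagrange.basis s v i).eval x =
      (x - v j) * ∑ i ∈ s.erase j with p i, (Lagrange.basis (s.erase j) v i).eval x := by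
  rw [mul_sum, filter_erase, ← sum_erase _ (a := j) (by simp)]
  refine sum_congr rfl fun i hi => ?_
  obtain ⟨hij, hi⟩ := mem_erase.1 hi
  exact (sub_mul_eval_basis_erase hvs (mem_filter.1 hi).1 hj hij x).symm

theorem sum_eval_basis (hvs : Set.InjOn v s) (hs : s.Nonempty) (x : F) :
    ∑ i ∈ s, (Lagrange.basis s v i).eval x = 1 := by
  rw [← eval_finsetSum, sum_basis hvs hs, eval_one]

theorem eval_neg_basis_neg (x : F) :
    (Lagrange.basis s (-v) i).eval (-x) = (Lagrange.basis s v i).eval x := by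
  simp only [Lagrange.basis, eval_prod, eval_basisDivisor, Pi.neg_apply, neg_sub_neg]
  refine prod_congr rfl fun j _ => ?_
  rw [← neg_sub (v i), ← neg_sub x, inv_neg, neg_mul_neg]

end Field

section LinearOrderedField

variable {K ι : Type*} [Field K] [LinearOrder K] [IsStrictOrderedRing K] [DecidableEq ι]
  {s : Finset ι} {v : ι → K} {a : ι} {x : K}

theorem one_le_eval_basis (hvs : Set.InjOn v s) (ha : a ∈ s) (hmax : ∀ i ∈ s, v i ≤ v a)
    (hax : v a < x) : 1 ≤ (Lagrange.basis s v a).eval x := by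
  rw [Lagrange.basis, eval_prod]
  refine one_le_prod fun i hi => ?_
  obtain ⟨hia, hi⟩ := mem_erase.1 hi
  have hlt : v i < v a := (hmax i hi).lt_of_ne ((hvs.ne_iff hi ha).2 hia)
  rw [eval_basisDivisor, one_le_inv_mul₀ (sub_pos.2 hlt)]
  linarith

theorem abs_sum_eval_basis_filter_le_le_of_erase (hvs : Set.InjOn v s) (ha : a ∈ s) {m M : ι}
    (hm : m ∈ s) (hM : M ∈ s) (hma : v m < v a) (hMa : v a < v M)
    (hm_le : |∑ i ∈ s.erase m with v i ≤ v a, (Lagrange.basis (s.erase m) v i).eval x| ≤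
      |(Lagrange.basis (s.erase m) v a).eval x|)
    (hM_le : |∑ i ∈ s.erase M with v i ≤ v a, (Lagrange.basis (s.erase M) v i).eval x| ≤
      |(Lagrange.basis (s.erase M) v a).eval x|) :
    |∑ i ∈ s with v i ≤ v a, (Lagrange.basis s v i).eval x| ≤
      |(Lagrange.basis s v a).eval x| := by
  set ℓ := fun (t : Finset ι) (i : ι) => (Lagrange.basis t v i).eval x
  have key : (v M - v m) * ∑ i ∈ s with v i ≤ v a, ℓ s i =
      (x - v m) * ∑ i ∈ s.erase m with v i ≤ v a, ℓ (s.erase m) i -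
        (x - v M) * ∑ i ∈ s.erase M with v i ≤ v a, ℓ (s.erase M) i := by
    rw [← sum_filter_sub_mul_eval_basis hvs hm, ← sum_filter_sub_mul_eval_basis hvs hM,
      ← sum_sub_distrib, mul_sum]
    exact sum_congr rfl fun i _ => by ring
  have hm' : (x - v m) * ℓ (s.erase m) a = (v a - v m) * ℓ s a :=
    sub_mul_eval_basis_erase hvs ha hm (ne_of_apply_ne v hma.ne') x
  have hM' : (x - v M) * ℓ (s.erase M) a = (v a - v M) * ℓ s a :=
    sub_mul_eval_basis_erase hvs ha hM (ne_of_apply_ne v hMa.ne) x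
  have hpos : 0 < v M - v m := sub_pos.2 (hma.trans hMa)
  refine le_of_mul_le_mul_left ?_ hpos
  calc (v M - v m) * |∑ i ∈ s with v i ≤ v a, ℓ s i|
      = |(x - v m) * ∑ i ∈ s.erase m with v i ≤ v a, ℓ (s.erase m) i -
          (x - v M) * ∑ i ∈ s.erase M with v i ≤ v a, ℓ (s.erase M) i| := by
        rw [← key, abs_mul, abs_of_pos hpos]
    _ ≤ |x - v m| * |∑ i ∈ s.erase m with v i ≤ v a, ℓ (s.erase m) i| +
          |x - v M| * |∑ i ∈ s.erase M with v i ≤ v a, ℓ (s.erase M) i| := by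
        rw [← abs_mul, ← abs_mul]
        exact abs_sub _ _
    _ ≤ |x - v m| * |ℓ (s.erase m) a| + |x - v M| * |ℓ (s.erase M) a| := by
        gcongr
    _ = (v M - v m) * |ℓ s a| := by
        rw [← abs_mul, ← abs_mul, hm', hM', abs_mul, abs_mul, abs_of_pos (sub_pos.2 hma),
          abs_of_neg (sub_neg.2 hMa)]
        ring

theorem abs_sum_eval_basis_filter_le_le_of_lt (hvs : Set.InjOn v s) (ha : a ∈ s)
    (hax : v a < x) :
    |∑ i ∈ s with v i ≤ v a, (Lagrange.basis s v i).eval x| ≤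
      |(Lagrange.basis s v a).eval x| := by
  induction s using Finset.strongInduction generalizing a with
  | H s ih =>
  by_cases hmax : ∀ i ∈ s, v i ≤ v a
  · rw [filter_true_of_mem hmax, sum_eval_basis hvs ⟨a, ha⟩, abs_one]
    exact (one_le_eval_basis hvs ha hmax hax).trans (le_abs_self _)
  by_cases hmin : ∀ i ∈ s, v a ≤ v i
  · have hsingle : {i ∈ s | v i ≤ v a} = {a} := by
      ext i
      simp only [mem_filter, mem_singleton]
      constructor
      · rintro ⟨hi, hia⟩
        exact hvs hi ha (le_antisymm hia (hmin i hi))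
      · rintro rfl
        exact ⟨ha, le_rfl⟩
    rw [hsingle, sum_singleton]
  push Not at hmax hmin
  obtain ⟨M, hM, hMa⟩ := hmax
  obtain ⟨m, hm, hma⟩ := hmin
  have herase {j : ι} (hj : j ∈ s) (haj : a ≠ j) :=
    ih (s.erase j) (erase_ssubset hj) (hvs.mono (erase_subset _ _)) (mem_erase.2 ⟨haj, ha⟩) hax
  exact abs_sum_eval_basis_filter_le_le_of_erase hvs ha hm hM hma hMa
    (herase hm (ne_of_apply_ne v hma.ne')) (herase hM (ne_of_apply_ne v hMa.ne))

theorem abs_sum_eval_basis_filter_ge_le_of_lt (hvs : Set.InjOn v s) (ha : a ∈ s)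
    (hxa : x < v a) :
    |∑ i ∈ s with v a ≤ v i, (Lagrange.basis s v i).eval x| ≤
      |(Lagrange.basis s v a).eval x| := by
  simpa only [Pi.neg_apply, neg_le_neg_iff, eval_neg_basis_neg] using
    abs_sum_eval_basis_filter_le_le_of_lt (v := -v) (x := -x) (neg_injective.comp_injOn hvs) ha
      (neg_lt_neg hxa)

theorem exists_abs_sum_eval_basis_filter_lt_le (hvs : Set.InjOn v s) (hs : s.Nonempty) {u : K}
    (hux : u ≤ x) :
    ∃ a ∈ s, |∑ i ∈ s with v i < u, (Lagrange.basis s v i).eval x| ≤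
      |(Lagrange.basis s v a).eval x| := by
  rcases (s.filter (v · < u)).eq_empty_or_nonempty with hempty | hne
  · obtain ⟨a, ha⟩ := hs
    exact ⟨a, ha, by rw [hempty, sum_empty, abs_zero]; exact abs_nonneg _⟩
  obtain ⟨a, ha, hamax⟩ := exists_max_image _ v hne
  obtain ⟨ha, hau⟩ := mem_filter.1 ha
  have hfilter : {i ∈ s | v i < u} = {i ∈ s | v i ≤ v a} := by
    ext i
    simp only [mem_filter, and_congr_right_iff]
    exact fun hi => ⟨fun hiu => hamax i (mem_filter.2 ⟨hi, hiu⟩), fun hia => hia.trans_lt hau⟩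
  exact ⟨a, ha, hfilter ▸ abs_sum_eval_basis_filter_le_le_of_lt hvs ha (hau.trans_le hux)⟩

theorem exists_abs_sum_eval_basis_filter_ge_le (hvs : Set.InjOn v s) (hs : s.Nonempty) {u : K}
    (hxu : x < u) :
    ∃ a ∈ s, |∑ i ∈ s with u ≤ v i, (Lagrange.basis s v i).eval x| ≤
      |(Lagrange.basis s v a).eval x| := by
  rcases (s.filter (u ≤ v ·)).eq_empty_or_nonempty with hempty | hne
  · obtain ⟨a, ha⟩ := hs
    exact ⟨a, ha, by rw [hempty, sum_empty, abs_zero]; exact abs_nonneg _⟩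
  obtain ⟨a, ha, hamin⟩ := exists_min_image _ v hne
  obtain ⟨ha, hua⟩ := mem_filter.1 ha
  have hfilter : {i ∈ s | u ≤ v i} = {i ∈ s | v a ≤ v i} := by
    ext i
    simp only [mem_filter, and_congr_right_iff]
    exact fun hi => ⟨fun hui => hamin i (mem_filter.2 ⟨hi, hui⟩), fun hai => hua.trans hai⟩
  exact ⟨a, ha, hfilter ▸ abs_sum_eval_basis_filter_ge_le_of_lt hvs ha (hxu.trans_le hua)⟩

theorem exists_abs_indicator_sub_sum_eval_basis_le (hvs : Set.InjOn v s) (hs : s.Nonempty)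
    (u x : K) :
    ∃ a ∈ s, |(if u ≤ x then 1 else 0) -
        ∑ i ∈ s, (if u ≤ v i then 1 else 0) * (Lagrange.basis s v i).eval x| ≤
      |(Lagrange.basis s v a).eval x| := by
  simp only [boole_mul, ← sum_filter]
  by_cases hux : u ≤ x
  · have hsplit := sum_filter_add_sum_filter_not s (u ≤ v ·) fun i => (Lagrange.basis s v i).eval x
    simp only [sum_eval_basis hvs hs, not_le] at hsplit
    rw [if_pos hux, ← hsplit, add_sub_cancel_left]
    exact exists_abs_sum_eval_basis_filter_lt_le hvs hs hux
  · rw [if_neg hux, zero_sub, abs_neg]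
    exact exists_abs_sum_eval_basis_filter_ge_le hvs hs (not_le.1 hux)

end LinearOrderedField

end Lagrange

theorem lagBasis_eq_eval_basis {n : ℕ} (x : Fin n → ℝ) (k : Fin n) (t : ℝ) :
    lagBasis x k t = (Lagrange.basis univ x k).eval t := by
  rw [lagBasis, Lagrange.basis, eval_prod]
  exact prod_congr rfl fun j _ => by rw [Lagrange.eval_basisDivisor, div_eq_inv_mul]

theorem stmt12_general {n : ℕ} (hn : 0 < n) (x : Fin n → ℝ)
    (hdec : ∀ i j : Fin n, i < j → x j < x i)
    (xv : ℝ) (hxv : xv ∈ Set.Icc (-1 : ℝ) 1) :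
    ∀ u ∈ Set.Icc (-1 : ℝ) 1,
      |(if u ≤ xv then (1 : ℝ) else 0) -
          ∑ j, (if u ≤ x j then (1 : ℝ) else 0) * lagBasis x j xv| ≤
        Finset.univ.sup' ⟨⟨0, hn⟩, Finset.mem_univ _⟩
          (fun j => sSup ((fun t => |lagBasis x j t|) '' Set.Icc (-1 : ℝ) 1)) := by
  intro u _
  obtain ⟨a, -, ha⟩ := Lagrange.exists_abs_indicator_sub_sum_eval_basis_le
    (StrictAnti.injective hdec).injOn ⟨⟨0, hn⟩, mem_univ _⟩ u xv
  simp only [lagBasis_eq_eval_basis]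
  have hbdd : BddAbove ((fun t => |(Lagrange.basis univ x a).eval t|) '' Set.Icc (-1 : ℝ) 1) :=
    (isCompact_Icc.image (Lagrange.basis univ x a).continuous.abs).bddAbove
  calc _ ≤ |(Lagrange.basis univ x a).eval xv| := ha
    _ ≤ sSup ((fun t => |(Lagrange.basis univ x a).eval t|) '' Set.Icc (-1 : ℝ) 1) :=
      le_csSup hbdd ⟨xv, hxv, rfl⟩
    _ ≤ _ := le_sup' (fun j =>
      sSup ((fun t => |(Lagrange.basis univ x j).eval t|) '' Set.Icc (-1 : ℝ) 1)) (mem_univ a)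

theorem stmt12 {n : ℕ} (hn : 0 < n) (x : Fin n → ℝ)
    (hdec : ∀ i j : Fin n, i < j → x j < x i)
    (hmem : ∀ i, x i ∈ Set.Icc (-1 : ℝ) 1)
    (xv : ℝ) (hxv : xv ∈ Set.Icc (-1 : ℝ) 1) :
    ∀ u ∈ Set.Icc (-1 : ℝ) 1,
      |(if u ≤ xv then (1 : ℝ) else 0) -
          ∑ j, (if u ≤ x j then (1 : ℝ) else 0) * lagBasis x j xv| ≤
        Finset.univ.sup' ⟨⟨0, hn⟩, Finset.mem_univ _⟩
          (fun j => sSup ((fun t => |lagBasis x j t|) '' Set.Icc (-1 : ℝ) 1)) :=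
  stmt12_general hn x hdec xv hxv
end

section
/- Wainerman's lemma (partial sums dominated by boundary term): for distinct nodes x_1 > ... > x_n in [-1,1] and x_{m+1} < u ≤ x_m, the partial sums a_k(u) = ∑_{j=1}^k ℓ_j(u) for k ≤ m and a_k(u) = ∑_{j=k}^n ℓ_j(u) for k ≥ m+1 satisfy |a_k(u)| ≤ |ℓ_k(u)| for all k = 1,...,n. -/
open Finset

/-!
For `u` off the nodes, `∑ j ∈ S, ℓ_j(u) = -ω(u) · f[x_j | j ∈ S]`, where `ω(u) = ∏ i, (u - x_i)`
and `f(t) = 1 / ((t - u) ∏_{i ∉ S} (t - x_i))`. If all poles of `f` lie below the nodes of `S`,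
the divided difference of `f` over `S` has sign `(-1)^(#S - 1)`, as `f` is completely monotone
there. Algebraically: removing a node `a` replaces `f` by its slope at `a`, and the slope of
`t ↦ ∏ (t - y)⁻¹` is a negative combination of such reciprocal products, so induction on `#S`
applies.
So `a_k(u)` and `a_{k-1}(u)` have opposite signs, and `a_k = ℓ_k + a_{k-1}` gives
`|a_k| ≤ |ℓ_k|`. Tail sums reduce to head sums under `x ↦ -x`, and the endpoint `u = x_m`
follows by continuity.
-/

lemma abs_add_le_abs_of_sign {R : Type*} [CommRing R] [LinearOrder R] [IsStrictOrderedRing R]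
    {ε a b : R} (hε : ε = 1 ∨ ε = -1) (hb : 0 ≤ ε * b) (hab : ε * (a + b) ≤ 0) :
    |a + b| ≤ |a| := by
  rw [abs_le]
  rcases hε with rfl | rfl <;> simp only [one_mul, neg_one_mul] at hb hab <;>
    constructor <;> linarith [le_abs_self a, neg_abs_le a, abs_nonneg a]

section DividedDifference

variable {𝕜 ι : Type*} [Field 𝕜] [DecidableEq ι] {s : Finset ι} {v : ι → 𝕜}

def divDiff (s : Finset ι) (v : ι → 𝕜) (f : 𝕜 → 𝕜) : 𝕜 :=
  ∑ i ∈ s, f (v i) / ∏ j ∈ s.erase i, (v i - v j)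

lemma divDiff_const (hv : Set.InjOn v s) (hs : 2 ≤ #s) (c : 𝕜) :
    divDiff s v (fun _ => c) = 0 := by
  have hdeg : (Polynomial.C c).degree < #s :=
    Polynomial.degree_C_le.trans_lt (by exact_mod_cast (by omega : 0 < #s))
  rw [divDiff]
  simpa [Polynomial.coeff_C, show #s - 1 ≠ 0 by omega] using
    (Lagrange.coeff_eq_sum hv hdeg).symm

lemma divDiff_insert {a : ι} (ha : a ∉ s) (hs : s.Nonempty) (hv : Set.InjOn v ↑(insert a s))
    (f : 𝕜 → 𝕜) : divDiff (insert a s) v f = divDiff s v (slope f (v a)) := by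
  have hprod : ∀ i ∈ s, ∏ j ∈ (insert a s).erase i, (v i - v j) =
      (v i - v a) * ∏ j ∈ s.erase i, (v i - v j) := fun i hi => by
    rw [erase_insert_of_ne (ne_of_mem_of_not_mem hi ha).symm,
      prod_insert fun h => ha (mem_of_mem_erase h)]
  have hone := divDiff_const hv (by rw [card_insert_of_notMem ha]; have := hs.card_pos; omega) 1
  suffices divDiff (insert a s) v f - divDiff s v (slope f (v a)) =
      f (v a) * divDiff (insert a s) v (fun _ => 1) by
    rwa [hone, mul_zero, sub_eq_zero] at this
  rw [divDiff, divDiff, divDiff, sum_insert ha, sum_insert ha, erase_insert ha, mul_add, mul_sum,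
    add_sub_assoc, ← sum_sub_distrib]
  congr 1
  · ring
  · refine sum_congr rfl fun i hi => ?_
    rw [hprod i hi, slope_def_field, div_div]
    ring

end DividedDifference

section InvNodal

variable {𝕜 : Type*} [Field 𝕜]

def invNodal (Y : Multiset 𝕜) (t : 𝕜) : 𝕜 := (Y.map (t - ·)).prod⁻¹

@[simp] lemma invNodal_zero (t : 𝕜) : invNodal 0 t = 1 := by simp [invNodal]

@[simp] lemma invNodal_cons (y : 𝕜) (Y : Multiset 𝕜) (t : 𝕜) :
    invNodal (y ::ₘ Y) t = (t - y)⁻¹ * invNodal Y t := by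
  simp [invNodal, mul_comm]

lemma slope_invNodal_cons {y a z : 𝕜} (Y : Multiset 𝕜) (hza : z ≠ a) (hya : y ≠ a) (hyz : y ≠ z) :
    slope (invNodal (y ::ₘ Y)) a z =
      (a - y)⁻¹ * (slope (invNodal Y) a z - invNodal (y ::ₘ Y) z) := by
  have := sub_ne_zero.2 hza
  have := sub_ne_zero.2 hya.symm
  have := sub_ne_zero.2 hyz.symm
  simp only [slope_def_field, invNodal_cons]
  field_simp
  ring

variable [LinearOrder 𝕜] [IsStrictOrderedRing 𝕜]

lemma invNodal_pos {Y : Multiset 𝕜} {t : 𝕜} (h : ∀ y ∈ Y, y < t) : 0 < invNodal Y t :=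
  inv_pos.2 (Multiset.prod_pos fun _ hy => by
    obtain ⟨y, hyY, rfl⟩ := Multiset.mem_map.1 hy
    exact sub_pos.2 (h y hyY))

theorem neg_one_pow_mul_prod_sub_pos [Fintype ι] (x : ι → 𝕜) {u : 𝕜} (hu : ∀ i, x i ≠ u) :
    0 < (-1) ^ #{i | u < x i} * ∏ i, (u - x i) := by
  rw [← prod_filter_mul_prod_filter_not univ (fun i => u < x i), ← mul_assoc, ← prod_neg]
  refine mul_pos (prod_pos fun i hi => ?_) (prod_pos fun i hi => ?_) <;> simp at hi
  · linarith
  · exact sub_pos.2 (lt_of_le_of_ne hi (hu i))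

end InvNodal

section Sign

variable {𝕜 ι : Type*} [Field 𝕜] [LinearOrder 𝕜] [IsStrictOrderedRing 𝕜] [DecidableEq ι]
  {s : Finset ι} {v : ι → 𝕜}

lemma divDiff_slope_invNodal_neg {ε a : 𝕜}
    (hpos : ∀ Y : Multiset 𝕜, Y ≠ 0 → (∀ i ∈ s, ∀ y ∈ Y, y < v i) →
      0 < ε * divDiff s v (invNodal Y))
    (ha : ∀ i ∈ s, v i ≠ a) {Y : Multiset 𝕜} (hY : Y ≠ 0) (hYa : ∀ y ∈ Y, y < a)
    (hYs : ∀ i ∈ s, ∀ y ∈ Y, y < v i) :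
    ε * divDiff s v (slope (invNodal Y) a) < 0 := by
  induction Y using Multiset.induction_on with
  | empty => exact absurd rfl hY
  | cons y Y ih =>
    have hya : y < a := hYa y (Multiset.mem_cons_self y Y)
    have hstep : divDiff s v (slope (invNodal (y ::ₘ Y)) a) = (a - y)⁻¹ *
        (divDiff s v (slope (invNodal Y) a) - divDiff s v (invNodal (y ::ₘ Y))) := by
      rw [divDiff, divDiff, divDiff, ← sum_sub_distrib, mul_sum]
      refine sum_congr rfl fun i hi => ?_
      rw [slope_invNodal_cons Y (ha i hi) hya.ne
        (hYs i hi y (Multiset.mem_cons_self y Y)).ne]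
      ring
    have htail : ε * divDiff s v (slope (invNodal Y) a) ≤ 0 := by
      rcases eq_or_ne Y 0 with rfl | hY'
      · simp [divDiff, slope_def_field]
      · exact (ih hY' (fun y hy => hYa y (Multiset.mem_cons_of_mem hy))
          fun i hi y hy => hYs i hi y (Multiset.mem_cons_of_mem hy)).le
    have hhead := hpos (y ::ₘ Y) (Multiset.cons_ne_zero) hYs
    have hc : 0 < (a - y)⁻¹ := inv_pos.2 (sub_pos.2 hya)
    rw [hstep, mul_left_comm, mul_sub]
    exact mul_neg_of_pos_of_neg hc (by linarith)

theorem divDiff_invNodal_pos (hs : s.Nonempty) (hv : Set.InjOn v s) {Y : Multiset 𝕜}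
    (hY : Y ≠ 0) (hYs : ∀ i ∈ s, ∀ y ∈ Y, y < v i) :
    0 < (-1) ^ (#s - 1) * divDiff s v (invNodal Y) := by
  induction hs using Nonempty.cons_induction generalizing Y with
  | singleton a => simpa [divDiff] using invNodal_pos (hYs a (mem_singleton_self a))
  | cons a s ha hs ih =>
    rw [cons_eq_insert] at hv hYs ⊢
    obtain ⟨k, hk⟩ : ∃ k, #s = k + 1 := ⟨#s - 1, by have := hs.card_pos; omega⟩
    have hneg := divDiff_slope_invNodal_neg
      (fun Y hY hYs => ih (hv.mono (subset_insert a s)) hY hYs)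
      (fun i hi h => ha (hv (mem_insert_of_mem hi) (mem_insert_self a s) h ▸ hi)) hY
      (hYs a (mem_insert_self a s)) fun i hi => hYs i (mem_insert_of_mem hi)
    rw [card_insert_of_notMem ha, Nat.add_sub_cancel, divDiff_insert ha hs hv, hk, pow_succ]
    rw [hk, Nat.add_sub_cancel] at hneg
    linarith

end Sign

section LagrangeBasis

variable {n : ℕ} {x : Fin n → ℝ} {S : Finset (Fin n)} {k : Fin n} {u : ℝ}

@[fun_prop]
lemma continuous_lagBasis (x : Fin n → ℝ) (k : Fin n) : Continuous (lagBasis x k) := by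
  unfold lagBasis
  fun_prop

lemma lagBasis_neg (x : Fin n → ℝ) (k : Fin n) (t : ℝ) : lagBasis (-x) k (-t) = lagBasis x k t :=
  prod_congr rfl fun j _ => by simp only [Pi.neg_apply]; rw [← neg_div_neg_eq]; ring_nf

lemma sum_lagBasis_eq_divDiff (hu : ∀ j ∈ S, x j ≠ u) :
    ∑ j ∈ S, lagBasis x j u =
      -(∏ i, (u - x i)) * divDiff S x (invNodal (u ::ₘ Sᶜ.val.map x)) := by
  rw [divDiff, mul_sum]
  refine sum_congr rfl fun j hj => ?_
  have hdenom : ∏ i ∈ univ.erase j, (x j - x i) =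
      (∏ i ∈ S.erase j, (x j - x i)) * ∏ i ∈ Sᶜ, (x j - x i) := by
    rw [← prod_union (disjoint_compl_right.mono_left (erase_subset j S))]
    congr 1
    ext i; by_cases hi : i = j <;> simp [hi, hj]; tauto
  have hpoles : invNodal (u ::ₘ Sᶜ.val.map x) (x j) =
      (x j - u)⁻¹ * (∏ i ∈ Sᶜ, (x j - x i))⁻¹ := by
    rw [invNodal, Multiset.map_cons, Multiset.map_map, Multiset.prod_cons, mul_inv]
    rfl
  have hcancel : (u - x j) * (x j - u)⁻¹ = -1 := by
    rw [← neg_sub, neg_mul, mul_inv_cancel₀ (sub_ne_zero.2 (hu j hj))]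
  rw [lagBasis, prod_div_distrib, hdenom, hpoles, ← mul_prod_erase univ _ (mem_univ j)]
  linear_combination ((∏ i ∈ univ.erase j, (u - x i)) * (∏ i ∈ S.erase j, (x j - x i))⁻¹ *
    (∏ i ∈ Sᶜ, (x j - x i))⁻¹) * hcancel

theorem sum_lagBasis_sign (hS : S.Nonempty) (hx : Set.InjOn x S) (hu : ∀ i, x i ≠ u)
    (hSu : ∀ j ∈ S, u < x j) (hSc : ∀ j ∈ S, ∀ i ∉ S, x i < x j) :
    0 < (-1) ^ (#S + #{i | u < x i}) * ∑ j ∈ S, lagBasis x j u := by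
  have hω := neg_one_pow_mul_prod_sub_pos x hu
  have hD := divDiff_invNodal_pos hS hx (Y := u ::ₘ Sᶜ.val.map x) (Multiset.cons_ne_zero) (by
    intro j hj y hy
    rcases Multiset.mem_cons.1 hy with rfl | hy
    · exact hSu j hj
    · obtain ⟨i, hi, rfl⟩ := Multiset.mem_map.1 hy
      exact hSc j hj i (mem_compl.1 hi))
  obtain ⟨p, hp⟩ : ∃ p, #S = p + 1 := ⟨#S - 1, by have := hS.card_pos; omega⟩
  rw [hp, Nat.add_sub_cancel] at hD
  rw [sum_lagBasis_eq_divDiff fun j _ => hu j, hp]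
  exact (mul_pos hω hD).trans_eq (by ring)

theorem abs_sum_lagBasis_le_of_above (hk : k ∈ S) (hx : Set.InjOn x S) (hu : ∀ i, x i ≠ u)
    (hSu : ∀ j ∈ S, u < x j) (hSc : ∀ j ∈ S, ∀ i ∉ S, x i < x j)
    (hkS : ∀ j ∈ S.erase k, x k < x j) :
    |∑ j ∈ S, lagBasis x j u| ≤ |lagBasis x k u| := by
  have hrest : 0 ≤ (-1) ^ (#(S.erase k) + #{i | u < x i}) * ∑ j ∈ S.erase k, lagBasis x j u := by
    rcases (S.erase k).eq_empty_or_nonempty with he | hne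
    · simp [he]
    refine (sum_lagBasis_sign hne (hx.mono (erase_subset k S)) hu
      (fun j hj => hSu j (mem_of_mem_erase hj)) fun j hj i hi => ?_).le
    by_cases hik : i = k
    · exact hik ▸ hkS j hj
    · exact hSc j (mem_of_mem_erase hj) i fun h => hi (mem_erase.2 ⟨hik, h⟩)
  have hall := (sum_lagBasis_sign ⟨k, hk⟩ hx hu hSu hSc).le
  rw [← add_sum_erase S _ hk] at hall ⊢
  rw [← card_erase_add_one hk, add_right_comm, pow_succ] at hall
  exact abs_add_le_abs_of_sign (neg_one_pow_eq_or ℝ _) hrest (by linarith)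

theorem abs_sum_lagBasis_le_of_below (hk : k ∈ S) (hx : Set.InjOn x S) (hu : ∀ i, x i ≠ u)
    (hSu : ∀ j ∈ S, x j < u) (hSc : ∀ j ∈ S, ∀ i ∉ S, x j < x i)
    (hkS : ∀ j ∈ S.erase k, x j < x k) :
    |∑ j ∈ S, lagBasis x j u| ≤ |lagBasis x k u| := by
  simpa only [lagBasis_neg] using abs_sum_lagBasis_le_of_above (x := -x) (u := -u) hk
    (fun i hi j hj h => hx hi hj (neg_inj.1 h)) (fun i h => hu i (neg_inj.1 h))
    (fun j hj => neg_lt_neg (hSu j hj)) (fun j hj i hi => neg_lt_neg (hSc j hj i hi))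
    fun j hj => neg_lt_neg (hkS j hj)

end LagrangeBasis

section DecreasingNodes

variable {n : ℕ} {x : Fin n → ℝ} (hx : StrictAnti x) {m : Fin n} (hm : (m : ℕ) + 1 < n) {t : ℝ}
  (ht : t ∈ Set.Ioo (x ⟨m + 1, hm⟩) (x m))
include hx ht

lemma lt_apply_iff_of_mem_gap (i : Fin n) : t < x i ↔ (i : ℕ) ≤ m := by
  refine ⟨fun h => ?_, fun h => ht.2.trans_le (hx.antitone (Fin.le_iff_val_le_val.2 h))⟩
  by_contra! hi
  exact (hx.antitone (Fin.le_iff_val_le_val.2 hi : (⟨m + 1, hm⟩ : Fin n) ≤ i)).trans_lt ht.1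
    |>.not_gt h

lemma apply_lt_iff_of_mem_gap (i : Fin n) : x i < t ↔ (m : ℕ) < i := by
  refine ⟨fun h => ?_, fun h => ?_⟩
  · by_contra! hi
    exact h.not_gt ((lt_apply_iff_of_mem_gap hx hm ht i).2 hi)
  · exact (hx.antitone (Fin.le_iff_val_le_val.2 h : (⟨m + 1, hm⟩ : Fin n) ≤ i)).trans_lt ht.1

lemma apply_ne_of_mem_gap (i : Fin n) : x i ≠ t := fun h => by
  have h1 := (lt_apply_iff_of_mem_gap hx hm ht i).not
  have h2 := (apply_lt_iff_of_mem_gap hx hm ht i).not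
  simp only [h, lt_irrefl, not_false_eq_true, true_iff, not_le, not_lt] at h1 h2
  omega

theorem abs_sum_lagBasis_head_le {k : Fin n} (hk : (k : ℕ) ≤ m) :
    |∑ j ∈ univ.filter (fun j : Fin n => (j : ℕ) ≤ (k : ℕ)), lagBasis x j t| ≤
      |lagBasis x k t| := by
  refine abs_sum_lagBasis_le_of_above (by simp) hx.injective.injOn
    (apply_ne_of_mem_gap hx hm ht) (fun j hj => (lt_apply_iff_of_mem_gap hx hm ht j).2 ?_)
    (fun j hj i hi => hx ?_) fun j hj => hx ?_
  all_goals simp only [mem_filter, mem_univ, true_and, mem_erase, ne_eq, not_le] at *; omega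

theorem abs_sum_lagBasis_tail_le {k : Fin n} (hk : (m : ℕ) < k) :
    |∑ j ∈ univ.filter (fun j : Fin n => (k : ℕ) ≤ (j : ℕ)), lagBasis x j t| ≤
      |lagBasis x k t| := by
  refine abs_sum_lagBasis_le_of_below (by simp) hx.injective.injOn
    (apply_ne_of_mem_gap hx hm ht) (fun j hj => (apply_lt_iff_of_mem_gap hx hm ht j).2 ?_)
    (fun j hj i hi => hx ?_) fun j hj => hx ?_
  all_goals simp only [mem_filter, mem_univ, true_and, mem_erase, ne_eq, not_le] at *; omega

end DecreasingNodes

theorem stmt14_general {n : ℕ} (x : Fin n → ℝ)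
    (hdec : ∀ i j : Fin n, i < j → x j < x i)
    (m : Fin n) (hm : (m : ℕ) + 1 < n)
    (u : ℝ) (hu1 : x ⟨(m : ℕ) + 1, hm⟩ < u) (hu2 : u ≤ x m) :
    ∀ k : Fin n,
      ((k : ℕ) ≤ (m : ℕ) →
        |∑ j ∈ Finset.univ.filter (fun j : Fin n => (j : ℕ) ≤ (k : ℕ)), lagBasis x j u| ≤
          |lagBasis x k u|) ∧
      ((m : ℕ) < (k : ℕ) →
        |∑ j ∈ Finset.univ.filter (fun j : Fin n => (k : ℕ) ≤ (j : ℕ)), lagBasis x j u| ≤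
          |lagBasis x k u|) := by
  have hu : u ∈ closure (Set.Ioo (x ⟨m + 1, hm⟩) (x m)) := by
    rw [closure_Ioo (hu1.trans_le hu2).ne]
    exact ⟨hu1.le, hu2⟩
  intro k
  exact ⟨fun hk => le_on_closure (fun t ht => abs_sum_lagBasis_head_le hdec hm ht hk)
      (by fun_prop) (by fun_prop) hu,
    fun hk => le_on_closure (fun t ht => abs_sum_lagBasis_tail_le hdec hm ht hk)
      (by fun_prop) (by fun_prop) hu⟩

theorem stmt14 {n : ℕ} (x : Fin n → ℝ)
    (hdec : ∀ i j : Fin n, i < j → x j < x i)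
    (hmem : ∀ i, x i ∈ Set.Icc (-1 : ℝ) 1)
    (m : Fin n) (hm : (m : ℕ) + 1 < n)
    (u : ℝ) (hu1 : x ⟨(m : ℕ) + 1, hm⟩ < u) (hu2 : u ≤ x m) :
    ∀ k : Fin n,
      ((k : ℕ) ≤ (m : ℕ) →
        |∑ j ∈ Finset.univ.filter (fun j : Fin n => (j : ℕ) ≤ (k : ℕ)), lagBasis x j u| ≤
          |lagBasis x k u|) ∧
      ((m : ℕ) < (k : ℕ) →
        |∑ j ∈ Finset.univ.filter (fun j : Fin n => (k : ℕ) ≤ (j : ℕ)), lagBasis x j u| ≤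
          |lagBasis x k u|) :=
  stmt14_general x hdec m hm u hu1 hu2
end

section
/- Sign of a_k via Rolle's theorem structure: for k ≤ m, the polynomial a_k(t) = ∑_{j=1}^k ℓ_j(t) of degree n-1 satisfies a_k(x_j) = 1 for j = 1,...,k and a_k(x_j) = 0 for j = k+1,...,n; consequently its derivative a_k'(t), a polynomial of degree n-2, has exactly n-2 zeros, one in each interval (x_{j+1}, x_j) for j ∈ {1,...,n-1} \ {k}. -/
open Finset Polynomial

/-- The `k`-th Lagrange basis polynomial (as a `Polynomial ℝ`) for nodes
`x : Fin n → ℝ` (indices `0,…,n-1` correspond to `x_1 > x_2 > … > x_n`). -/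
noncomputable def lagBasisPoly {n : ℕ} (x : Fin n → ℝ) (k : Fin n) : Polynomial ℝ :=
  ∏ j ∈ Finset.univ.erase k, Polynomial.C ((x k - x j)⁻¹) * (Polynomial.X - Polynomial.C (x j))

/-- The partial sum `a_k = ℓ_1 + ⋯ + ℓ_k` (0-indexed: `∑_{j ≤ k} ℓ_j`). -/
noncomputable def partialSumPoly {n : ℕ} (x : Fin n → ℝ) (k : Fin n) : Polynomial ℝ :=
  ∑ j ∈ Finset.univ.filter (fun j : Fin n => (j : ℕ) ≤ (k : ℕ)), lagBasisPoly x j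

/-!
Each of the `n - 1` gaps `(x_{j+1}, x_j)` other than the one at `k` has equal values of `a_k` at
its ends, so Rolle's theorem puts a zero of `a_k'` in it. These `n - 2` gaps are disjoint and
`a_k'` is a nonzero polynomial (as `a_k` is not constant) of degree at most `n - 2`, so counting
roots shows that its degree is exactly `n - 2` and that each gap holds exactly one root.
-/

namespace Polynomial

theorem derivative_ne_zero_of_eval_ne {R : Type*} [Semiring R] [IsAddTorsionFree R] {p : R[X]}
    {a b : R} (h : p.eval a ≠ p.eval b) : derivative p ≠ 0 := fun h0 => h <| by
  rw [eq_C_of_derivative_eq_zero h0]; simp only [eval_C]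

theorem exists_isRoot_derivative_of_eval_eq {p : ℝ[X]} {a b : ℝ} (hab : a < b)
    (h : p.eval a = p.eval b) : ∃ c ∈ Set.Ioo a b, (derivative p).IsRoot c := by
  simpa only [IsRoot.def, Polynomial.deriv] using exists_deriv_eq_zero hab p.continuousOn h

section RootCounting

variable {R ι : Type*} [CommRing R] [IsDomain R]

open Classical in
theorem sum_card_roots_mem_le_natDegree (q : R[X]) {S : Finset ι}
    {I : ι → Set R} (hI : (S : Set ι).PairwiseDisjoint I) :
    ∑ i ∈ S, #{y ∈ q.roots.toFinset | y ∈ I i} ≤ q.natDegree := by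
  have hdisj : (S : Set ι).PairwiseDisjoint fun i => {y ∈ q.roots.toFinset | y ∈ I i} :=
    fun i hi j hj hij => disjoint_filter.2 fun _ _ hy => Set.disjoint_left.1 (hI hi hj hij) hy
  calc ∑ i ∈ S, #{y ∈ q.roots.toFinset | y ∈ I i}
      = #(S.biUnion fun i => {y ∈ q.roots.toFinset | y ∈ I i}) := (card_biUnion hdisj).symm
    _ ≤ #q.roots.toFinset := card_le_card (biUnion_subset.2 fun _ _ => filter_subset _ _)
    _ ≤ q.natDegree := (Multiset.toFinset_card_le _).trans (card_roots' q)

theorem natDegree_eq_card_and_existsUnique_isRoot {q : R[X]} (hq : q ≠ 0) {S : Finset ι}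
    {I : ι → Set R} (hI : (S : Set ι).PairwiseDisjoint I)
    (hroot : ∀ i ∈ S, ∃ y ∈ I i, q.IsRoot y) (hdeg : q.natDegree ≤ #S) :
    q.natDegree = #S ∧ ∀ i ∈ S, ∃! y, y ∈ I i ∧ q.IsRoot y := by
  classical
  set c : ι → ℕ := fun i => #{y ∈ q.roots.toFinset | y ∈ I i}
  have hsum : ∑ i ∈ S, c i ≤ #S := (sum_card_roots_mem_le_natDegree q hI).trans hdeg
  have hpos : ∀ i ∈ S, 1 ≤ c i := by
    intro i hi
    obtain ⟨y, hyI, hy⟩ := hroot i hi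
    exact card_pos.2 ⟨y, by simp [hq, hy.eq_zero, hyI]⟩
  refine ⟨le_antisymm hdeg ?_, fun i hi => ?_⟩
  · calc #S = ∑ i ∈ S, 1 := card_eq_sum_ones S
      _ ≤ ∑ i ∈ S, c i := sum_le_sum hpos
      _ ≤ q.natDegree := sum_card_roots_mem_le_natDegree q hI
  obtain ⟨y, hyI, hy⟩ := hroot i hi
  refine ⟨y, ⟨hyI, hy⟩, fun z ⟨hzI, hz⟩ => by_contra fun hzy => ?_⟩
  have hci : 1 < c i :=
    one_lt_card.2 ⟨z, by simp [hq, hz.eq_zero, hzI], y, by simp [hq, hy.eq_zero, hyI], hzy⟩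
  have hlt := sum_lt_sum hpos ⟨i, hi, hci⟩
  simp only [sum_const, smul_eq_mul, mul_one] at hlt
  omega

end RootCounting

end Polynomial

open Function in
theorem Antitone.pairwise_disjoint_on_Ioo_succ_castSucc {β : Type*} [Preorder β] {m : ℕ}
    {x : Fin (m + 1) → β} (hx : Antitone x) :
    Pairwise (Disjoint on fun i : Fin m => Set.Ioo (x i.succ) (x i.castSucc)) :=
  fun i j hij => by
    simpa only [onFun, Fin.orderSucc_castSucc] using
      hx.pairwise_disjoint_on_Ioo_succ (Fin.castSucc_injective m |>.ne hij)

section partialSumPoly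

variable {n : ℕ} {x : Fin n → ℝ}

theorem partialSumPoly_eq_interpolate (k : Fin n) :
    partialSumPoly x k =
      Lagrange.interpolate univ x (fun j => if (j : ℕ) ≤ k then 1 else 0) := by
  rw [partialSumPoly, Lagrange.interpolate_apply, sum_filter]
  refine sum_congr rfl fun j _ => ?_
  split_ifs <;> simp [lagBasisPoly, Lagrange.basis, Lagrange.basisDivisor]

theorem eval_partialSumPoly (hx : Function.Injective x) (k j : Fin n) :
    (partialSumPoly x k).eval (x j) = if (j : ℕ) ≤ k then 1 else 0 := by
  rw [partialSumPoly_eq_interpolate, Lagrange.eval_interpolate_at_node _ hx.injOn (mem_univ j)]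

theorem natDegree_partialSumPoly_le (hx : Function.Injective x) (k : Fin n) :
    (partialSumPoly x k).natDegree ≤ n - 1 := by
  refine natDegree_sum_le_of_forall_le _ _ fun j _ => ?_
  change (Lagrange.basis univ x j).natDegree ≤ n - 1
  rw [Lagrange.natDegree_basis hx.injOn (mem_univ j), card_univ, Fintype.card_fin]

end partialSumPoly

theorem exists_isRoot_derivative_partialSumPoly {m : ℕ} {x : Fin (m + 1) → ℝ}
    (hx : StrictAnti x) (k : Fin (m + 1)) {i : Fin m} (hik : (i : ℕ) ≠ k) :
    ∃ y ∈ Set.Ioo (x i.succ) (x i.castSucc), (partialSumPoly x k).derivative.IsRoot y := by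
  refine exists_isRoot_derivative_of_eval_eq (hx i.castSucc_lt_succ) ?_
  rw [eval_partialSumPoly hx.injective, eval_partialSumPoly hx.injective]
  exact if_congr (by simp only [Fin.val_succ, Fin.val_castSucc]; omega) rfl rfl

theorem stmt15_general {n : ℕ} (x : Fin n → ℝ)
    (hdec : ∀ i j : Fin n, i < j → x j < x i)
    (k : Fin n) (hk : (k : ℕ) + 1 < n) :
    (∀ j : Fin n, (j : ℕ) ≤ (k : ℕ) → (partialSumPoly x k).eval (x j) = 1) ∧
    (∀ j : Fin n, (k : ℕ) < (j : ℕ) → (partialSumPoly x k).eval (x j) = 0) ∧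
    (partialSumPoly x k).derivative.natDegree = n - 2 ∧
    (∀ j : Fin n, ∀ hj : (j : ℕ) + 1 < n, j ≠ k →
      ∃! y : ℝ, y ∈ Set.Ioo (x ⟨(j : ℕ) + 1, hj⟩) (x j) ∧
        (partialSumPoly x k).derivative.eval y = 0) := by
  have hx : StrictAnti x := hdec
  have heval := eval_partialSumPoly hx.injective k
  -- the gap `(x (i + 1), x i)` is indexed by `i : Fin m`, and the gap at `k` is left out
  obtain ⟨m, rfl⟩ : ∃ m, n = m + 1 := ⟨n - 1, by omega⟩
  have hk' : (k : ℕ) < m := by omega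
  have hcard : #(univ.erase (k.castLT hk')) = m - 1 := by simp
  have hne : (partialSumPoly x k).derivative ≠ 0 :=
    derivative_ne_zero_of_eval_ne (a := x k) (b := x ⟨k + 1, hk⟩) (by simp [heval])
  have hdeg : (partialSumPoly x k).derivative.natDegree ≤ m - 1 :=
    (natDegree_derivative_le _).trans <|
      Nat.sub_le_sub_right (natDegree_partialSumPoly_le hx.injective k) 1
  obtain ⟨hdeg_eq, hunique⟩ := natDegree_eq_card_and_existsUnique_isRoot hne
    (hx.antitone.pairwise_disjoint_on_Ioo_succ_castSucc.set_pairwise _)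
    (fun i hi => exists_isRoot_derivative_partialSumPoly hx k (by simpa [Fin.ext_iff] using hi))
    (hcard ▸ hdeg)
  refine ⟨fun j hj => by simp [heval, hj], fun j hj => by simp [heval, hj.not_ge], by omega,
    fun j hj hjk => ?_⟩
  have hj' : (j : ℕ) < m := by omega
  have hsucc : (j.castLT hj').succ = ⟨j + 1, hj⟩ := rfl
  simpa [hsucc] using hunique (j.castLT hj') (by simpa [Fin.ext_iff] using hjk)

theorem stmt15 {n : ℕ} (x : Fin n → ℝ)
    (hdec : ∀ i j : Fin n, i < j → x j < x i)
    (hmem : ∀ i, x i ∈ Set.Icc (-1 : ℝ) 1)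
    (k : Fin n) (hk : (k : ℕ) + 1 < n) :
    (∀ j : Fin n, (j : ℕ) ≤ (k : ℕ) → (partialSumPoly x k).eval (x j) = 1) ∧
    (∀ j : Fin n, (k : ℕ) < (j : ℕ) → (partialSumPoly x k).eval (x j) = 0) ∧
    (partialSumPoly x k).derivative.natDegree = n - 2 ∧
    (∀ j : Fin n, ∀ hj : (j : ℕ) + 1 < n, j ≠ k →
      ∃! y : ℝ, y ∈ Set.Ioo (x ⟨(j : ℕ) + 1, hj⟩) (x j) ∧
        (partialSumPoly x k).derivative.eval y = 0) :=
  stmt15_general x hdec k hk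
end
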